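/- arXiv:2207.04934 — 2 statements merged into one kernel-verified Lean document; each statement's English description precedes it below -/
import Mathlib

section
/- Let f_c : ℝ^m → ℝ be convex and differentiable, f : ℝ^n → ℝ differentiable, P : ℝ^m → ℝ^n linear with transpose R = Pᵀ, y₀ ∈ ℝ^n and x₀ = R y₀. Define ψ(x) = f_c(x) − ⟨x − x₀, ∇f_c(x₀) − R ∇f(y₀)⟩. If x ∈ ℝ^m satisfies ψ(x) < f_c(x₀), then ⟨P(x − x₀), ∇f(y₀)⟩ < 0; that is, d = P(x − x₀) is a descent direction for the fine-grid objective f at y₀. -/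
/-!
Restricting the convex function `f_c` to the segment from `x₀` to `x` gives the first-order
inequality `⟪∇f_c(x₀), x - x₀⟫ ≤ f_c x - f_c x₀`. Hence `ψ x < f_c x₀` forces
`⟪x - x₀, R ∇f(y₀)⟫ < 0`, and by `R = Pᵀ` this inner product is `⟪P (x - x₀), ∇f(y₀)⟫`.
-/

open scoped InnerProductSpace

theorem ConvexOn.le_sub_of_hasFDerivAt {E : Type*} [NormedAddCommGroup E] [NormedSpace ℝ E]
    {s : Set E} {f : E → ℝ} {f' : E →L[ℝ] ℝ} {x y : E}
    (hf : ConvexOn ℝ s f) (hx : x ∈ s) (hy : y ∈ s) (hf' : HasFDerivAt f f' x) :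
    f' (y - x) ≤ f y - f x := by
  set γ : ℝ →ᵃ[ℝ] E := AffineMap.lineMap x y
  have hγ : ∀ t ∈ Set.Icc (0 : ℝ) 1, γ t ∈ s := fun t ht =>
    hf.1.lineMap_mem hx hy ht
  have hconv : ConvexOn ℝ (Set.Icc 0 1) (f ∘ γ) :=
    (hf.comp_affineMap γ).subset hγ (convex_Icc 0 1)
  have hderiv : HasDerivAt (f ∘ γ) (f' (y - x)) 0 := by
    have hγ' : HasDerivAt γ (y - x) 0 := AffineMap.hasDerivAt_lineMap
    have hf'γ : HasFDerivAt f f' (γ 0) := by simpa [γ] using hf'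
    exact hf'γ.comp_hasDerivAt 0 hγ'
  simpa [slope_def_field, γ] using
    hconv.le_slope_of_hasDerivAt (by simp) (by simp) one_pos hderiv

theorem ConvexOn.inner_le_sub_of_hasGradientAt {E : Type*} [NormedAddCommGroup E]
    [InnerProductSpace ℝ E] [CompleteSpace E] {s : Set E} {f : E → ℝ} {g x y : E}
    (hf : ConvexOn ℝ s f) (hx : x ∈ s) (hy : y ∈ s) (hg : HasGradientAt f g x) :
    ⟪g, y - x⟫_ℝ ≤ f y - f x :=
  hf.le_sub_of_hasFDerivAt hx hy hg.hasFDerivAt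

theorem coarse_model_descent_direction_general
    (m n : ℕ)
    (fc : EuclideanSpace ℝ (Fin m) → ℝ)
    (hconv : ConvexOn ℝ Set.univ fc)
    (gfc : EuclideanSpace ℝ (Fin m) → EuclideanSpace ℝ (Fin m))
    (gf : EuclideanSpace ℝ (Fin n) → EuclideanSpace ℝ (Fin n))
    (hfc : ∀ x, HasGradientAt fc (gfc x) x)
    (P : EuclideanSpace ℝ (Fin m) →L[ℝ] EuclideanSpace ℝ (Fin n))
    (R : EuclideanSpace ℝ (Fin n) →L[ℝ] EuclideanSpace ℝ (Fin m))
    (hR : R = ContinuousLinearMap.adjoint P)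
    (y₀ : EuclideanSpace ℝ (Fin n)) (x₀ : EuclideanSpace ℝ (Fin m))
    (ψ : EuclideanSpace ℝ (Fin m) → ℝ)
    (hψ : ∀ x, ψ x = fc x - ⟪x - x₀, gfc x₀ - R (gf y₀)⟫_ℝ)
    (x : EuclideanSpace ℝ (Fin m)) (hdec : ψ x < fc x₀) :
    ⟪P (x - x₀), gf y₀⟫_ℝ < 0 := by
  have hfirst_order : ⟪gfc x₀, x - x₀⟫_ℝ ≤ fc x - fc x₀ :=
    hconv.inner_le_sub_of_hasGradientAt (Set.mem_univ _) (Set.mem_univ _) (hfc x₀)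
  have hadj : ⟪P (x - x₀), gf y₀⟫_ℝ = ⟪x - x₀, R (gf y₀)⟫_ℝ := by
    rw [hR, ContinuousLinearMap.adjoint_inner_right]
  rw [hψ, inner_sub_right, real_inner_comm (gfc x₀)] at hdec
  rw [hadj]
  linarith

/-- Coarse-grid descent directions: if `f_c` is convex and differentiable and
`ψ(x) = f_c(x) − ⟨x − x₀, ∇f_c(x₀) − R ∇f(y₀)⟩` with `R = Pᵀ` and `x₀ = R y₀`,
then `ψ(x) < f_c(x₀)` implies `⟨P(x − x₀), ∇f(y₀)⟩ < 0`, i.e. `d = P(x − x₀)`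
is a descent direction for the fine-grid objective `f` at `y₀`. -/
theorem coarse_model_descent_direction
    (m n : ℕ)
    (fc : EuclideanSpace ℝ (Fin m) → ℝ) (f : EuclideanSpace ℝ (Fin n) → ℝ)
    (hconv : ConvexOn ℝ Set.univ fc)
    (gfc : EuclideanSpace ℝ (Fin m) → EuclideanSpace ℝ (Fin m))
    (gf : EuclideanSpace ℝ (Fin n) → EuclideanSpace ℝ (Fin n))
    (hfc : ∀ x, HasGradientAt fc (gfc x) x)
    (hf : ∀ y, HasGradientAt f (gf y) y)
    (P : EuclideanSpace ℝ (Fin m) →L[ℝ] EuclideanSpace ℝ (Fin n))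
    (R : EuclideanSpace ℝ (Fin n) →L[ℝ] EuclideanSpace ℝ (Fin m))
    (hR : R = ContinuousLinearMap.adjoint P)
    (y₀ : EuclideanSpace ℝ (Fin n)) (x₀ : EuclideanSpace ℝ (Fin m))
    (hx₀ : x₀ = R y₀)
    (ψ : EuclideanSpace ℝ (Fin m) → ℝ)
    (hψ : ∀ x, ψ x = fc x - ⟪x - x₀, gfc x₀ - R (gf y₀)⟫_ℝ)
    (x : EuclideanSpace ℝ (Fin m)) (hdec : ψ x < fc x₀) :
    ⟪P (x - x₀), gf y₀⟫_ℝ < 0 :=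
  coarse_model_descent_direction_general m n fc hconv gfc gf hfc P R hR y₀ x₀ ψ hψ x hdec
end

section
/- Let I be a finite nonempty index set, (η_i)_{i∈I} ⊂ (0,1) and weights ω_i > 0 with Σ_{i∈I} ω_i = 1. Define the weighted geometric mean η̄ = (∏_{i∈I} (η_i/(1−η_i))^{ω_i}) / (1 + ∏_{i∈I} (η_i/(1−η_i))^{ω_i}). Then η̄ ∈ (0,1) and η̄ satisfies the Riemannian center-of-mass condition Σ_{i∈I} ω_i exp_{η̄}^{-1}(η_i) = 0, i.e., Σ_{i∈I} ω_i η̄(1−η̄) log((1−η̄) η_i / (η̄ (1−η_i))) = 0; moreover η̄ is the unique point in (0,1) with this property. -/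
/-!
In the log-odds coordinate `t(x) = log (x / (1 - x))` the inverse exponential map becomes
`exp_c⁻¹(x) = c (1 - c) (t(x) - t(c))`. Since the weights sum to `1`, the center-of-mass
condition at `c ∈ (0,1)` says exactly that `t(c)` is the weighted mean `∑ ωᵢ t(ηᵢ) = log P`
of the log-odds, where `P = ∏ (ηᵢ / (1 - ηᵢ)) ^ ωᵢ`. As `t` is injective on `(0,1)` and
`P / (1 + P)` is the point with odds `P`, that point is the unique solution.
-/

open Real Finset

lemma div_one_add_mem_Ioo {p : ℝ} (hp : 0 < p) : p / (1 + p) ∈ Set.Ioo (0 : ℝ) 1 :=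
  ⟨by positivity, (div_lt_one (by positivity)).2 (by linarith)⟩

lemma div_one_add_div_one_sub_div_one_add {p : ℝ} (hp : 1 + p ≠ 0) :
    p / (1 + p) / (1 - p / (1 + p)) = p := by
  field_simp
  ring

lemma eq_div_one_add_of_div_one_sub_eq {c p : ℝ} (hc : c ≠ 1) (h : c / (1 - c) = p) :
    c = p / (1 + p) := by
  have hc' : 1 - c ≠ 0 := sub_ne_zero.2 hc.symm
  subst h
  field_simp
  ring

lemma log_mul_div_mul_eq_log_div_sub_log_div {a b x y : ℝ} (ha : a ≠ 0) (hb : b ≠ 0)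
    (hx : x ≠ 0) (hy : y ≠ 0) :
    log (b * x / (a * y)) = log (x / y) - log (a / b) := by
  rw [← log_div (div_ne_zero hx hy) (div_ne_zero ha hb)]
  congr 1
  field_simp

lemma log_prod_rpow {ι : Type*} (s : Finset ι) (x ω : ι → ℝ) (hx : ∀ i ∈ s, 0 < x i) :
    log (∏ i ∈ s, x i ^ ω i) = ∑ i ∈ s, ω i * log (x i) := by
  rw [log_prod fun i hi => (rpow_pos_of_pos (hx i hi) _).ne']
  exact sum_congr rfl fun i hi => log_rpow (hx i hi) _

lemma sum_mul_log_odds_ratio {ι : Type*} [Fintype ι] (η ω : ι → ℝ)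
    (hη₀ : ∀ i, η i ≠ 0) (hη₁ : ∀ i, η i ≠ 1) (hsum : ∑ i, ω i = 1)
    {c : ℝ} (hc₀ : c ≠ 0) (hc₁ : c ≠ 1) :
    ∑ i, ω i * (c * (1 - c) * log ((1 - c) * η i / (c * (1 - η i))))
      = c * (1 - c) * (∑ i, ω i * log (η i / (1 - η i)) - log (c / (1 - c))) := by
  have hterm : ∀ i, log ((1 - c) * η i / (c * (1 - η i)))
      = log (η i / (1 - η i)) - log (c / (1 - c)) := fun i =>
    log_mul_div_mul_eq_log_div_sub_log_div hc₀ (sub_ne_zero.2 hc₁.symm) (hη₀ i)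
      (sub_ne_zero.2 (hη₁ i).symm)
  calc ∑ i, ω i * (c * (1 - c) * log ((1 - c) * η i / (c * (1 - η i))))
      = ∑ i, (c * (1 - c) * (ω i * log (η i / (1 - η i)))
          - ω i * (c * (1 - c) * log (c / (1 - c)))) :=
        sum_congr rfl fun i _ => by rw [hterm]; ring
    _ = c * (1 - c) * (∑ i, ω i * log (η i / (1 - η i)) - log (c / (1 - c))) := by
        rw [sum_sub_distrib, ← mul_sum, ← sum_mul, hsum]
        ring

theorem weighted_geometric_mean_center_of_mass_general
    (ι : Type*) [Fintype ι]
    (η : ι → ℝ) (hη : ∀ i, η i ∈ Set.Ioo (0 : ℝ) 1)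
    (ω : ι → ℝ) (hsum : ∑ i, ω i = 1)
    (ηbar : ℝ)
    (hbar : ηbar = (∏ i, (η i / (1 - η i)) ^ (ω i))
        / (1 + ∏ i, (η i / (1 - η i)) ^ (ω i))) :
    ηbar ∈ Set.Ioo (0 : ℝ) 1
    ∧ ∑ i, ω i * (ηbar * (1 - ηbar)
        * Real.log ((1 - ηbar) * η i / (ηbar * (1 - η i)))) = 0
    ∧ ∀ c ∈ Set.Ioo (0 : ℝ) 1,
        (∑ i, ω i * (c * (1 - c) * Real.log ((1 - c) * η i / (c * (1 - η i)))) = 0)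
        → c = ηbar := by
  set P := ∏ i, (η i / (1 - η i)) ^ (ω i)
  have hodds_pos : ∀ i, 0 < η i / (1 - η i) := fun i =>
    div_pos (hη i).1 (sub_pos.2 (hη i).2)
  have hP : 0 < P := prod_pos fun i _ => rpow_pos_of_pos (hodds_pos i) _
  have hlogP : log P = ∑ i, ω i * log (η i / (1 - η i)) :=
    log_prod_rpow _ _ _ fun i _ => hodds_pos i
  have hbar_mem : ηbar ∈ Set.Ioo (0 : ℝ) 1 := hbar ▸ div_one_add_mem_Ioo hP
  have hbar_odds : ηbar / (1 - ηbar) = P :=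
    hbar ▸ div_one_add_div_one_sub_div_one_add (by positivity)
  have hsum_eq {c : ℝ} (hc : c ∈ Set.Ioo (0 : ℝ) 1) :=
    sum_mul_log_odds_ratio η ω (fun i => (hη i).1.ne') (fun i => (hη i).2.ne) hsum
      hc.1.ne' hc.2.ne
  refine ⟨hbar_mem, ?_, fun c hc hzero => ?_⟩
  · rw [hsum_eq hbar_mem, hbar_odds, hlogP, sub_self, mul_zero]
  · rw [hsum_eq hc, ← hlogP] at hzero
    have hlog : log (c / (1 - c)) = log P := by
      have hc' : c * (1 - c) ≠ 0 := mul_ne_zero hc.1.ne' (sub_pos.2 hc.2).ne'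
      linarith [(mul_eq_zero.1 hzero).resolve_left hc']
    have hc_odds : c / (1 - c) = P :=
      log_injOn_pos (div_pos hc.1 (sub_pos.2 hc.2)) hP hlog
    exact hbar ▸ eq_div_one_add_of_div_one_sub_eq hc.2.ne hc_odds

/-- The weighted geometric mean
`η̄ = (∏ᵢ (ηᵢ/(1−ηᵢ))^{ωᵢ}) / (1 + ∏ᵢ (ηᵢ/(1−ηᵢ))^{ωᵢ})` of points
`ηᵢ ∈ (0,1)` with positive weights `ωᵢ` summing to `1` lies in `(0,1)` and is
the unique point of `(0,1)` satisfying the Riemannian center-of-mass condition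
`Σᵢ ωᵢ exp_{η̄}⁻¹(ηᵢ) = 0`, where
`exp_c⁻¹(η) = c(1−c) log((1−c)η/(c(1−η)))`. -/
theorem weighted_geometric_mean_center_of_mass
    (ι : Type*) [Fintype ι] [Nonempty ι]
    (η : ι → ℝ) (hη : ∀ i, η i ∈ Set.Ioo (0 : ℝ) 1)
    (ω : ι → ℝ) (hω : ∀ i, 0 < ω i) (hsum : ∑ i, ω i = 1)
    (ηbar : ℝ)
    (hbar : ηbar = (∏ i, (η i / (1 - η i)) ^ (ω i))
        / (1 + ∏ i, (η i / (1 - η i)) ^ (ω i))) :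
    ηbar ∈ Set.Ioo (0 : ℝ) 1
    ∧ ∑ i, ω i * (ηbar * (1 - ηbar)
        * Real.log ((1 - ηbar) * η i / (ηbar * (1 - η i)))) = 0
    ∧ ∀ c ∈ Set.Ioo (0 : ℝ) 1,
        (∑ i, ω i * (c * (1 - c) * Real.log ((1 - c) * η i / (c * (1 - η i)))) = 0)
        → c = ηbar :=
  weighted_geometric_mean_center_of_mass_general ι η hη ω hsum ηbar hbar
end
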